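/- For every finite tree G (a finite connected acyclic simple graph) there exists a geometric simplicial complex K in ℝ² and an injective map φ from the vertex set of G into ℝ² such that the faces of K are exactly the singletons {φ(v)} for vertices v of G together with the pairs {φ(u), φ(v)} for edges {u,v} of G; that is, every finite tree admits a geometric (straight-line, non-crossing) realization in the plane. -/

import Mathlib

/-!
Put the vertices on the parabola `y = x²`. The point of the chord over `[a, b]` with abscissa
`x` lies at height `(x - a) * (b - x)` above the parabola: this vanishes only at the endpoints and
strictly grows when the interval is enlarged. Hence two chords whose intervals are nested or have
disjoint interiors meet only in common endpoints, unless they coincide.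

Every finite tree has an injective real labelling whose edge intervals are pairwise of this kind:
remove a leaf, label the rest, and give the leaf a label just to the right of its neighbour's, so
that no label lies inside the new edge's interval.
-/

open Set

def IntervalLaminar (a b c d : ℝ) : Prop :=
  uIcc a b ⊆ uIcc c d ∨ uIcc c d ⊆ uIcc a b ∨ Disjoint (uIoo a b) (uIoo c d)

namespace IntervalLaminar

variable {a b c d : ℝ}

theorem symm (h : IntervalLaminar a b c d) : IntervalLaminar c d a b := by
  rcases h with h | h | h
  exacts [Or.inr (Or.inl h), Or.inl h, Or.inr (Or.inr h.symm)]

theorem swap_left (h : IntervalLaminar a b c d) : IntervalLaminar b a c d := by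
  rwa [IntervalLaminar, uIcc_comm b, uIoo_comm b]

theorem of_notMem_uIoo (hc : c ∉ uIoo a b) (hd : d ∉ uIoo a b) : IntervalLaminar a b c d := by
  have hdisj : Disjoint (uIoo a b) (uIoo c d) ↔ min (a ⊔ b) (c ⊔ d) ≤ max (a ⊓ b) (c ⊓ d) :=
    Ioo_disjoint_Ioo
  simp only [uIoo, mem_Ioo, not_and_or, not_lt] at hc hd
  rcases hc with hc | hc <;> rcases hd with hd | hd
  · exact Or.inr (Or.inr (hdisj.2 ((min_le_right _ _).trans
      ((sup_le hc hd).trans (le_max_left _ _)))))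
  · exact Or.inl (uIcc_subset_uIcc (mem_uIcc_of_le (hc.trans inf_le_left) (le_sup_left.trans hd))
      (mem_uIcc_of_le (hc.trans inf_le_right) (le_sup_right.trans hd)))
  · exact Or.inl (uIcc_subset_uIcc (mem_uIcc_of_ge (hd.trans inf_le_left) (le_sup_left.trans hc))
      (mem_uIcc_of_ge (hd.trans inf_le_right) (le_sup_right.trans hc)))
  · exact Or.inr (Or.inr (hdisj.2 ((min_le_left _ _).trans
      ((le_inf hc hd).trans (le_max_right _ _)))))

end IntervalLaminar

theorem affineIndependent_coe_pair {𝕜 E : Type*} [DivisionRing 𝕜] [AddCommGroup E] [Module 𝕜 E]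
    [DecidableEq E] (p q : E) : AffineIndependent 𝕜 ((↑) : ({p, q} : Finset E) → E) := by
  by_cases hpq : p = q
  · subst hpq
    rw [Finset.pair_eq_singleton]
    exact affineIndependent_of_subsingleton 𝕜 _
  · have := (affineIndependent_of_ne 𝕜 hpq).range
    rwa [Matrix.range_cons_cons_empty, ← Finset.coe_pair] at this

theorem SimpleGraph.exists_simplicialComplex_faces_eq {𝕜 E V : Type*} [Field 𝕜] [PartialOrder 𝕜]
    [IsOrderedRing 𝕜] [AddCommGroup E] [Module 𝕜 E] [DecidableEq E] (G : SimpleGraph V) (φ : V → E)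
    (hφ : ∀ ⦃u v u' v'⦄, (u = v ∨ G.Adj u v) → (u' = v' ∨ G.Adj u' v') →
      segment 𝕜 (φ u) (φ v) ∩ segment 𝕜 (φ u') (φ v') ⊆
        convexHull 𝕜 ({φ u, φ v} ∩ {φ u', φ v'})) :
    ∃ K : Geometry.SimplicialComplex 𝕜 E,
      K.faces = {s | (∃ v, s = {φ v}) ∨ ∃ u v, G.Adj u v ∧ s = {φ u, φ v}} := by
  set F : Set (Finset E) := {s | (∃ v, s = {φ v}) ∨ ∃ u v, G.Adj u v ∧ s = {φ u, φ v}}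
  have hF : ∀ {s}, s ∈ F → ∃ u v, (u = v ∨ G.Adj u v) ∧ s = {φ u, φ v} := by
    rintro s (⟨v, rfl⟩ | ⟨u, v, huv, rfl⟩)
    exacts [⟨v, v, Or.inl rfl, (Finset.pair_eq_singleton _).symm⟩, ⟨u, v, Or.inr huv, rfl⟩]
  refine ⟨⟨⟨F, ?_⟩, ?_, ?_⟩, rfl⟩
  · intro s hs
    obtain ⟨u, v, huv, rfl⟩ := hF hs
    refine ⟨Finset.insert_nonempty _ _, fun t hts ht => ?_⟩
    have hts' : (t : Set E) ⊆ {φ u, φ v} := by rw [← Finset.coe_pair]; exact_mod_cast hts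
    rcases Set.subset_pair_iff_eq.1 hts' with h | h | h | h
    · exact absurd (Finset.coe_eq_empty.1 h) ht.ne_empty
    · exact Or.inl ⟨u, Finset.coe_eq_singleton.1 h⟩
    · exact Or.inl ⟨v, Finset.coe_eq_singleton.1 h⟩
    · rw [← Finset.coe_pair, Finset.coe_inj] at h
      rcases huv with rfl | huv
      exacts [Or.inl ⟨u, h.trans (Finset.pair_eq_singleton _)⟩, Or.inr ⟨u, v, huv, h⟩]
  · intro s hs
    obtain ⟨u, v, -, rfl⟩ := hF hs
    exact affineIndependent_coe_pair _ _
  · intro s t hs ht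
    obtain ⟨u, v, huv, rfl⟩ := hF hs
    obtain ⟨u', v', huv', rfl⟩ := hF ht
    simpa only [Finset.coe_pair, convexHull_pair] using hφ huv huv'

def parabola (t : ℝ) : Fin 2 → ℝ := ![t, t ^ 2]

theorem parabola_injective : Function.Injective parabola :=
  fun a b h => by simpa [parabola] using congrFun h 0

theorem mem_segment_parabola {a b : ℝ} {X : Fin 2 → ℝ}
    (hX : X ∈ segment ℝ (parabola a) (parabola b)) :
    X 0 ∈ uIcc a b ∧ X 1 = X 0 ^ 2 + (X 0 - a) * (b - X 0) := by
  obtain ⟨s, t, hs, ht, hst, rfl⟩ := hX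
  have h0 : (s • parabola a + t • parabola b) 0 = s * a + t * b := by simp [parabola]
  have h1 : (s • parabola a + t • parabola b) 1 = s * a ^ 2 + t * b ^ 2 := by simp [parabola]
  refine ⟨h0 ▸ segment_eq_uIcc a b ▸ ⟨s, t, hs, ht, hst, rfl⟩, ?_⟩
  obtain rfl : t = 1 - s := by linarith
  rw [h0, h1]
  ring

theorem eq_parabola_of_apply_one_eq_sq {X : Fin 2 → ℝ} (h : X 1 = X 0 ^ 2) :
    X = parabola (X 0) := by
  ext i; fin_cases i <;> simp [parabola, h]

theorem segment_parabola_inter_subset_convexHull {a b c d : ℝ} (h : IntervalLaminar a b c d) :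
    segment ℝ (parabola a) (parabola b) ∩ segment ℝ (parabola c) (parabola d) ⊆
      convexHull ℝ ({parabola a, parabola b} ∩ {parabola c, parabola d}) := by
  wlog hab : a ≤ b generalizing a b
  · rw [segment_symm, Set.pair_comm]
    exact this h.swap_left (le_of_not_ge hab)
  wlog hcd : c ≤ d generalizing c d
  · rw [segment_symm ℝ (parabola c), Set.pair_comm (parabola c)]
    exact this h.symm.swap_left.symm (le_of_not_ge hcd)
  rintro X ⟨hX, hX'⟩
  obtain ⟨hxab, hX1⟩ := mem_segment_parabola hX
  obtain ⟨hxcd, hX1'⟩ := mem_segment_parabola hX'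
  rw [uIcc_of_le hab] at hxab
  rw [uIcc_of_le hcd] at hxcd
  have hheight : (X 0 - a) * (b - X 0) = (X 0 - c) * (d - X 0) := by linarith
  by_cases hx : (X 0 - a) * (b - X 0) = 0
  · have hx' : (X 0 - c) * (d - X 0) = 0 := hheight ▸ hx
    rw [eq_parabola_of_apply_one_eq_sq (by linarith : X 1 = X 0 ^ 2)]
    have hend : ∀ {p q}, (X 0 - p) * (q - X 0) = 0 →
        parabola (X 0) ∈ ({parabola p, parabola q} : Set _) :=
      fun h => (mul_eq_zero.1 h).imp (fun h => congrArg parabola (sub_eq_zero.1 h))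
        (fun h => congrArg parabola (sub_eq_zero.1 h).symm)
    exact subset_convexHull ℝ _ ⟨hend hx, hend hx'⟩
  · have hinterior : ∀ {p q}, X 0 ∈ Icc p q → (X 0 - p) * (q - X 0) ≠ 0 → X 0 ∈ Ioo p q :=
      fun h h' => ⟨h.1.lt_of_ne fun e => h' (by rw [e]; ring),
        h.2.lt_of_ne fun e => h' (by rw [e]; ring)⟩
    have hxab' := hinterior hxab hx
    have hxcd' := hinterior hxcd (hheight ▸ hx)
    obtain ⟨rfl, rfl⟩ : a = c ∧ b = d := by
      rw [IntervalLaminar, uIcc_of_le hab, uIcc_of_le hcd, uIoo_of_le hab, uIoo_of_le hcd,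
        Icc_subset_Icc_iff hab, Icc_subset_Icc_iff hcd] at h
      rcases h with ⟨hca, hbd⟩ | ⟨hac, hdb⟩ | h
      · constructor <;> nlinarith [hxab'.1, hxab'.2]
      · constructor <;> nlinarith [hxcd'.1, hxcd'.2]
      · exact (h.ne_of_mem hxab' hxcd' rfl).elim
    rw [Set.inter_self, convexHull_pair]
    exact hX

open Filter Topology in
theorem exists_gt_forall_notMem_Ioc {α ι : Type*} [LinearOrder α] [TopologicalSpace α]
    [OrderTopology α] [DenselyOrdered α] [NoMaxOrder α] [Finite ι] (g : ι → α) (p : α) :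
    ∃ t, p < t ∧ ∀ i, g i ∉ Ioc p t := by
  have : ∀ᶠ t in 𝓝[>] p, p < t ∧ ∀ i, g i ∉ Ioc p t := by
    refine eventually_mem_nhdsWithin.and (eventually_all.2 fun i => ?_)
    rcases le_or_gt (g i) p with h | h
    · exact .of_forall fun t hi => h.not_gt hi.1
    · filter_upwards [Ioo_mem_nhdsGT h] with t ht hi using (ht.2.trans_le hi.2).false
  exact this.exists

namespace SimpleGraph

variable {V : Type*} {G : SimpleGraph V}

def IsLaminarLabelling (G : SimpleGraph V) (f : V → ℝ) : Prop :=
  Function.Injective f ∧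
    ∀ ⦃u v u' v'⦄, G.Adj u v → G.Adj u' v' → IntervalLaminar (f u) (f v) (f u') (f v')

theorem isLaminarLabelling_of_subsingleton [Subsingleton V] (G : SimpleGraph V) (f : V → ℝ) :
    G.IsLaminarLabelling f :=
  ⟨Function.injective_of_subsingleton f, fun u v _ _ huv _ => (huv.ne (Subsingleton.elim u v)).elim⟩

theorem IsLaminarLabelling.intervalLaminar {f : V → ℝ} (hf : G.IsLaminarLabelling f)
    {u v u' v' : V} (huv : u = v ∨ G.Adj u v) (huv' : u' = v' ∨ G.Adj u' v') :
    IntervalLaminar (f u) (f v) (f u') (f v') := by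
  rcases huv with rfl | huv
  · exact .of_notMem_uIoo (by simp) (by simp)
  rcases huv' with rfl | huv'
  · exact (IntervalLaminar.of_notMem_uIoo (by simp) (by simp)).symm
  exact hf.2 huv huv'

theorem IsLaminarLabelling.exists_extend_to_leaf {l x : V} (hx : ∀ y, G.Adj l y ↔ y = x)
    {ψ : ({l}ᶜ : Set V) → ℝ} (hψ : (G.induce {l}ᶜ).IsLaminarLabelling ψ) [Finite V] :
    ∃ f, G.IsLaminarLabelling f := by
  classical
  have hxl : x ≠ l := ((hx x).2 rfl).ne.symm
  obtain ⟨t, hxt, ht⟩ := exists_gt_forall_notMem_Ioc ψ (ψ ⟨x, hxl⟩)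
  set f : V → ℝ := fun v => if h : v = l then t else ψ ⟨v, h⟩
  have hfl : f l = t := dif_pos rfl
  have hf : ∀ v (h : v ≠ l), f v = ψ ⟨v, h⟩ := fun v h => dif_neg h
  have hgap : ∀ w, f w ∉ uIoo (f x) (f l) := by
    intro w
    rw [hfl, hf x hxl, uIoo_of_lt hxt]
    by_cases hw : w = l
    · simp [hw, hfl]
    · exact hf w hw ▸ fun h => ht _ (Ioo_subset_Ioc_self h)
  have hnew : ∀ ⦃u v⦄, G.Adj u v → (u = l ∨ v = l) → ∀ c d,
      IntervalLaminar (f u) (f v) (f c) (f d) := by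
    rintro u v huv (rfl | rfl) c d
    · obtain rfl := (hx v).1 huv
      exact (IntervalLaminar.of_notMem_uIoo (hgap c) (hgap d)).swap_left
    · obtain rfl := (hx u).1 huv.symm
      exact .of_notMem_uIoo (hgap c) (hgap d)
  refine ⟨f, Function.Injective.dite (· = l) (f := fun _ => t)
    (fun _ _ _ => Subsingleton.elim _ _) hψ.1 ?_, fun u v u' v' huv huv' => ?_⟩
  · intro _ w _ hw hwt
    exact ht ⟨w, hw⟩ ⟨hxt.trans_eq hwt, hwt.ge⟩
  by_cases h : u = l ∨ v = l
  · exact hnew huv h _ _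
  by_cases h' : u' = l ∨ v' = l
  · exact (hnew huv' h' _ _).symm
  rw [not_or] at h h'
  rw [hf u h.1, hf v h.2, hf u' h'.1, hf v' h'.2]
  exact hψ.2 (u := ⟨u, h.1⟩) huv huv'

theorem IsTree.exists_isLaminarLabelling [Finite V] (hG : G.IsTree) :
    ∃ f, G.IsLaminarLabelling f := by
  induction h : Nat.card V generalizing V with
  | zero =>
    have := hG.connected.nonempty
    exact absurd h Nat.card_pos.ne'
  | succ n ih =>
    obtain hV | hV := subsingleton_or_nontrivial V
    · exact ⟨0, G.isLaminarLabelling_of_subsingleton 0⟩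
    have := Fintype.ofFinite V
    classical
    obtain ⟨l, hl⟩ := hG.exists_vert_degree_one_of_nontrivial
    obtain ⟨x, hlx, hx⟩ := degree_eq_one_iff_existsUnique_adj.1 hl
    have hT : (G.induce {l}ᶜ).IsTree :=
      ⟨hG.connected.induce_compl_singleton_of_degree_eq_one hl, hG.isAcyclic.induce _⟩
    have hcard : Nat.card ({l}ᶜ : Set V) = n := by
      rw [Nat.card_coe_set_eq, Set.ncard_compl, Set.ncard_singleton, h, Nat.add_sub_cancel]
    obtain ⟨ψ, hψ⟩ := ih hT hcard
    exact hψ.exists_extend_to_leaf fun y => ⟨hx y, fun e => e ▸ hlx⟩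

end SimpleGraph

/-- Every finite tree admits a geometric (straight-line, non-crossing)
realization in the plane: there are a geometric simplicial complex `K` in ℝ² and an
injection `φ` of the vertices into ℝ² whose faces are exactly the singletons on vertices
together with the segments corresponding to the edges. -/
theorem finite_tree_realizable_in_plane {V : Type*} [Fintype V] (G : SimpleGraph V)
    (hG : G.IsTree) :
    ∃ (K : Geometry.SimplicialComplex ℝ (Fin 2 → ℝ)) (φ : V → Fin 2 → ℝ),
      Function.Injective φ ∧
      K.faces = {s : Finset (Fin 2 → ℝ) |
        (∃ v : V, s = {φ v}) ∨ ∃ u v : V, G.Adj u v ∧ s = {φ u, φ v}} := by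
  obtain ⟨f, hf⟩ := hG.exists_isLaminarLabelling
  obtain ⟨K, hK⟩ := G.exists_simplicialComplex_faces_eq (𝕜 := ℝ) (parabola ∘ f)
    fun _ _ _ _ huv huv' => segment_parabola_inter_subset_convexHull (hf.intervalLaminar huv huv')
  exact ⟨K, parabola ∘ f, parabola_injective.comp hf.1, hK⟩
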